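/- arXiv:2601.12724 — 3 statements merged into one kernel-verified Lean document; each statement's English description precedes it below -/
import Mathlib

section
/- Let V = [n] and s_{ia} ≥ 0. There exist jointly distributed random variables X_1, ..., X_n such that for all A ⊆ V, H((X_a)_{a∈A}) = ∑_{i∈V} max_{a∈A} s_{ia}; that is, the facility location function is entropic. -/
open Finset

/-- Shannon entropy of a random variable `X` on a finite probability space with pmf `p`. -/
noncomputable def entropy {Ω : Type} [Fintype Ω] {S : Type} (p : Ω → ℝ) (X : Ω → S) : ℝ := by
  classical
  exact ∑ s ∈ Finset.univ.image X,
    Real.negMulLog (∑ ω ∈ Finset.univ.filter (fun ω => X ω = s), p ω)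

/-- `p` is a probability mass function. -/
def IsPMF {Ω : Type} [Fintype Ω] (p : Ω → ℝ) : Prop :=
  (∀ ω, 0 ≤ p ω) ∧ ∑ ω, p ω = 1

/-- Mutual independence of a finite family of random variables. -/
def MutuallyIndep {Ω : Type} [Fintype Ω] {ι : Type} [Fintype ι] {S : Type}
    (p : Ω → ℝ) (Z : ι → Ω → S) : Prop := by
  classical
  exact ∀ s : ι → S,
    (∑ ω ∈ Finset.univ.filter (fun ω => ∀ u, Z u ω = s u), p ω) =
      ∏ u, ∑ ω ∈ Finset.univ.filter (fun ω => Z u ω = s u), p ω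

/-- A set function on `[n]` is entropic if it is the joint-entropy function of
jointly distributed discrete random variables. -/
def IsEntropic {n : ℕ} (f : Finset (Fin n) → ℝ) : Prop :=
  ∃ (N : ℕ) (S : Type) (p : Fin N → ℝ) (X : Fin n → Fin N → S),
    IsPMF p ∧ ∀ A : Finset (Fin n), f A = entropy p (fun ω => fun i : A => X i.1 ω)


/-- `max_{a ∈ A} (s a)`, with the convention that the max over `∅` is `0`. -/
noncomputable def flMax {n : ℕ} (s : Fin n → ℝ) (A : Finset (Fin n)) : ℝ :=
  (insert (0 : ℝ) (A.image s)).max' (Finset.insert_nonempty _ _)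

/-!
Let `X a` be a tuple of independent coordinates `Z j` (`j ∈ J`) in which only the coordinates
`j ∈ R a` are revealed. Then `(X a)_{a ∈ A}` carries the same information as `(Z j)` for `j` in
`⋃_{a ∈ A} R a`, so its entropy is the coverage sum `∑_{j ∈ ⋃ R a} H(Z j)`, and the entropies
`H(Z j) ≥ 0` can be prescribed at will. The facility location function is such a coverage
function: let `J` consist of the pairs `(i, w)` with `w` a value of `s i`, let `X a` reveal `(i, w)`
iff `w ≤ s i a`, and give `Z (i, w)` the entropy `w - w'`, where `w'` is the next smaller value
of `s i` (or `0`). For each `i` these jumps telescope to `max_{a ∈ A} s i a`.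
-/

open Finset Real
open scoped NNReal

section Entropy

variable {Ω Ω' S : Type} [Fintype Ω] [Fintype Ω']

theorem entropy_eq_neg_sum_mul_log [DecidableEq S] (p : Ω → ℝ) (X : Ω → S) :
    entropy p X = -∑ ω, p ω * log (∑ ω' with X ω' = X ω, p ω') := by
  rw [entropy, ← sum_fiberwise_of_maps_to (t := univ.image X) (g := X)
    (fun ω _ => mem_image_of_mem X (mem_univ ω)), ← sum_neg_distrib]
  -- `entropy` uses classical decidability instances; `congr!` identifies them with `DecidableEq S`
  congr! 1
  · congr!
  simp only [negMulLog_def, neg_mul, sum_mul, ← sum_neg_distrib]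
  refine sum_congr (by congr!) fun ω hω => ?_
  rw [(mem_filter.1 hω).2]
  congr!

theorem entropy_comp_equiv (e : Ω' ≃ Ω) (p : Ω → ℝ) (X : Ω → S) :
    entropy (fun ν => p (e ν)) (fun ν => X (e ν)) = entropy p X := by
  classical
  simp only [entropy_eq_neg_sum_mul_log, Finset.sum_filter]
  rw [← e.sum_comp (fun ω => p ω * log (∑ ω', if X ω' = X ω then p ω' else 0))]
  congr! 4 with ν
  exact e.sum_comp (fun ω' => if X ω' = X (e ν) then p ω' else 0)

end Entropy

theorem exists_pmf_sum_negMulLog_eq {T : Type} [Fintype T] [Nonempty T] {d : ℝ}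
    (hd₀ : 0 ≤ d) (hd : d ≤ log (Fintype.card T)) :
    ∃ q : T → ℝ, (∀ t, 0 ≤ q t) ∧ ∑ t, q t = 1 ∧ ∑ t, negMulLog (q t) = d := by
  classical
  obtain ⟨t₀⟩ := ‹Nonempty T›
  have hc : (0 : ℝ) < Fintype.card T := by positivity
  -- interpolate between the point mass at `t₀` (entropy `0`) and the uniform law
  -- (entropy `log |T|`)
  let mix : ℝ → T → ℝ := fun θ t => (1 - θ) * (if t = t₀ then 1 else 0) + θ / Fintype.card T
  have hcont : Continuous fun θ => ∑ t, negMulLog (mix θ t) := by fun_prop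
  have h0 : ∑ t, negMulLog (mix 0 t) = 0 := by simp [mix, apply_ite negMulLog]
  have h1 : ∑ t, negMulLog (mix 1 t) = log (Fintype.card T) := by
    simp only [mix, sub_self, zero_mul, zero_add, sum_const, card_univ, nsmul_eq_mul,
      negMulLog, one_div, log_inv]
    field_simp
  obtain ⟨θ, ⟨hθ₀, hθ₁⟩, hθ⟩ := intermediate_value_Icc zero_le_one hcont.continuousOn
    (show d ∈ Set.Icc _ _ by rw [h0, h1]; exact ⟨hd₀, hd⟩)
  refine ⟨mix θ, fun t => by positivity, ?_, hθ⟩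
  simp only [mix, sum_add_distrib, ← mul_sum, sum_ite_eq', mem_univ, if_true, sum_const,
    card_univ, nsmul_eq_mul]
  field_simp
  ring

section ProductPMF

variable {J T : Type} [Fintype J] [DecidableEq J] [Fintype T] {q : J → T → ℝ}

theorem sum_prod_mul_prod_eq_prod_sum (hq : ∀ j, ∑ t, q j t = 1) (K : Finset J)
    (φ : J → T → ℝ) :
    ∑ ω : J → T, (∏ j, q j (ω j)) * ∏ k ∈ K, φ k (ω k) = ∏ k ∈ K, ∑ t, q k t * φ k t := by
  let ψ : J → T → ℝ := fun j t => q j t * if j ∈ K then φ j t else 1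
  have hψ : ∀ ω : J → T, (∏ j, q j (ω j)) * ∏ k ∈ K, φ k (ω k) = ∏ j, ψ j (ω j) := by
    intro ω
    rw [← univ_inter K, ← prod_ite_mem, ← prod_mul_distrib]
  have hsum : ∀ j, ∑ t, ψ j t = if j ∈ K then ∑ t, q j t * φ j t else 1 := by
    intro j
    split_ifs with hj <;> simp [ψ, hj, hq]
  rw [sum_congr rfl fun ω _ => hψ ω, ← Fintype.prod_sum, prod_congr rfl fun j _ => hsum j,
    prod_ite_mem, univ_inter]

theorem sum_filter_forall_mem_eq_prod [DecidableEq T] (hq : ∀ j, ∑ t, q j t = 1)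
    (K : Finset J) (ω₀ : J → T) :
    ∑ ω : J → T with ∀ k ∈ K, ω k = ω₀ k, ∏ j, q j (ω j) = ∏ k ∈ K, q k (ω₀ k) := by
  have := sum_prod_mul_prod_eq_prod_sum hq K fun k t => if t = ω₀ k then 1 else 0
  simp only [prod_boole, mul_boole, sum_ite_eq', mem_univ, if_true] at this
  rw [sum_filter]
  convert this

theorem sum_prod_mul_apply (hq : ∀ j, ∑ t, q j t = 1) (k : J) (φ : T → ℝ) :
    ∑ ω : J → T, (∏ j, q j (ω j)) * φ (ω k) = ∑ t, q k t * φ t := by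
  simpa using sum_prod_mul_prod_eq_prod_sum hq {k} fun _ => φ

theorem entropy_pi_eq_sum_negMulLog {S : Type} (hq : ∀ j, ∑ t, q j t = 1) (K : Finset J)
    (X : (J → T) → S) (hX : ∀ ω ω', X ω' = X ω ↔ ∀ k ∈ K, ω' k = ω k) :
    entropy (fun ω => ∏ j, q j (ω j)) X = ∑ k ∈ K, ∑ t, negMulLog (q k t) := by
  classical
  have hlog : ∀ ω : J → T, (∏ j, q j (ω j)) * log (∏ k ∈ K, q k (ω k))
      = ∑ k ∈ K, (∏ j, q j (ω j)) * log (q k (ω k)) := by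
    intro ω
    by_cases hω : ∏ j, q j (ω j) = 0
    · simp [hω]
    · rw [log_prod fun k _ => prod_ne_zero_iff.1 hω k (mem_univ k), mul_sum]
  calc entropy (fun ω => ∏ j, q j (ω j)) X
      = -∑ ω : J → T, (∏ j, q j (ω j)) * log (∏ k ∈ K, q k (ω k)) := by
        simp only [entropy_eq_neg_sum_mul_log, hX, sum_filter_forall_mem_eq_prod hq]
    _ = ∑ k ∈ K, ∑ t, negMulLog (q k t) := by
        simp only [hlog, sum_comm (s := (univ : Finset (J → T))), negMulLog_def, neg_mul,
          sum_neg_distrib]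
        exact congrArg Neg.neg
          (sum_congr rfl fun k _ => sum_prod_mul_apply hq k fun t => log (q k t))

end ProductPMF

theorem exists_nat_forall_le_log {ι : Type} [Finite ι] (d : ι → ℝ) :
    ∃ m : ℕ, 0 < m ∧ ∀ i, d i ≤ log m := by
  have hlog := tendsto_log_atTop.comp tendsto_natCast_atTop_atTop
  obtain ⟨m, hm, hd⟩ := ((Filter.eventually_gt_atTop 0).and
    (Filter.eventually_all.2 fun i => hlog.eventually_ge_atTop (d i))).exists
  exact ⟨m, hm, hd⟩

theorem isEntropic_sum_biUnion {n : ℕ} {J : Type} [Fintype J] [DecidableEq J] (D : J → ℝ)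
    (hD : ∀ j, 0 ≤ D j) (R : Fin n → Finset J) :
    IsEntropic fun A => ∑ j ∈ A.biUnion R, D j := by
  obtain ⟨m, hm, hDm⟩ := exists_nat_forall_le_log D
  have : NeZero m := ⟨hm.ne'⟩
  choose q hq₀ hq₁ hqD using fun j => exists_pmf_sum_negMulLog_eq (T := Fin m) (hD j)
    (by simpa using hDm j)
  let e := (Fintype.equivFin (J → Fin m)).symm
  refine ⟨_, J → Option (Fin m), fun ν => ∏ j, q j (e ν j),
    fun a ν j => if j ∈ R a then some (e ν j) else none,
    ⟨fun ν => prod_nonneg fun j _ => hq₀ j _, ?_⟩, fun A => ?_⟩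
  · rw [e.sum_comp (fun ω => ∏ j, q j (ω j)), ← Fintype.prod_sum]
    exact prod_eq_one fun j _ => hq₁ j
  · rw [entropy_comp_equiv e (fun ω => ∏ j, q j (ω j))
      (fun ω (a : A) j => if j ∈ R a then some (ω j) else none),
      entropy_pi_eq_sum_negMulLog hq₁ (A.biUnion R)]
    · exact sum_congr rfl fun j _ => (hqD j).symm
    intro ω ω'
    simp only [funext_iff, Subtype.forall, mem_biUnion]
    refine ⟨fun h k ⟨a, ha, hk⟩ => by simpa [hk] using h a ha k, fun h a ha k => ?_⟩
    split_ifs with hk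
    exacts [congrArg some (h k ⟨a, ha, hk⟩), rfl]

namespace Finset

noncomputable def jump (W : Finset ℝ≥0) (w : ℝ≥0) : ℝ≥0 :=
  w - {x ∈ W | x < w}.sup id

theorem sum_jump (W : Finset ℝ≥0) : ∑ w ∈ W, W.jump w = W.sup id := by
  refine W.induction_on_max (by simp) fun a W ha ih => ?_
  have hlt : {x ∈ insert a W | x < a} = W := by
    ext x; simp only [mem_filter, mem_insert]
    exact ⟨fun ⟨hx, hxa⟩ => hx.resolve_left hxa.ne, fun hx => ⟨Or.inr hx, ha x hx⟩⟩
  have hjump : ∀ w ∈ W, (insert a W).jump w = W.jump w := fun w hw => by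
    rw [jump, jump, filter_insert, if_neg (ha w hw).not_gt]
  have hsup : W.sup id ≤ a := Finset.sup_le fun x hx => (ha x hx).le
  rw [sum_insert fun h => (ha a h).false, sum_congr rfl hjump, ih, jump, hlt,
    tsub_add_cancel_of_le hsup, sup_insert, id, sup_of_le_left hsup]

theorem jump_filter_of_antitone {p : ℝ≥0 → Prop} [DecidablePred p] (W : Finset ℝ≥0)
    (hp : Antitone p) {w : ℝ≥0} (hw : p w) :
    jump {x ∈ W | p x} w = W.jump w := by
  rw [jump, jump, filter_filter]
  congr 2
  exact filter_congr fun x _ => ⟨fun h => h.2, fun h => ⟨hp h.le hw, h⟩⟩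

theorem sum_jump_filter_exists_le {ι : Type} (W : Finset ℝ≥0) (A : Finset ι) (f : ι → ℝ≥0)
    (hf : ∀ a ∈ A, f a ∈ W) :
    ∑ w ∈ W with ∃ a ∈ A, w ≤ f a, W.jump w = A.sup f := by
  have hdown : Antitone fun x => ∃ a ∈ A, x ≤ f a :=
    fun _ _ hxy ⟨a, ha, hy⟩ => ⟨a, ha, hxy.trans hy⟩
  rw [← sum_congr rfl fun w hw => jump_filter_of_antitone W hdown (mem_filter.1 hw).2, sum_jump]
  refine le_antisymm (Finset.sup_le fun w hw => ?_) (Finset.sup_le fun a ha => ?_)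
  · obtain ⟨a, ha, hwa⟩ := (mem_filter.1 hw).2
    exact hwa.trans (le_sup ha)
  · exact le_sup (f := id) (mem_filter.2 ⟨hf a ha, a, ha, le_rfl⟩)

end Finset

theorem flMax_eq_sup_toNNReal {n : ℕ} {f : Fin n → ℝ} (hf : ∀ a, 0 ≤ f a) (A : Finset (Fin n)) :
    flMax f A = A.sup fun a => (f a).toNNReal := by
  have hM : 0 ≤ flMax f A := le_max' _ 0 (mem_insert_self _ _)
  refine le_antisymm (max'_le _ _ _ fun y hy => ?_) ?_
  · obtain rfl | ⟨a, ha, rfl⟩ := by simpa only [mem_insert, mem_image] using hy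
    · exact NNReal.coe_nonneg _
    · rw [← Real.coe_toNNReal _ (hf a)]
      exact NNReal.coe_le_coe.2 (le_sup (f := fun a => (f a).toNNReal) ha)
  · rw [← Real.le_toNNReal_iff_coe_le hM]
    exact Finset.sup_le fun a ha => Real.toNNReal_le_toNNReal
      (le_max' _ _ (mem_insert_of_mem (mem_image_of_mem f ha)))

/-- The facility location function `f(A) = ∑_i max_{a ∈ A} s i a` is entropic. -/
theorem facility_location_is_entropic {n : ℕ}
    (s : Fin n → Fin n → ℝ) (hs : ∀ i a, 0 ≤ s i a) :
    IsEntropic (fun A => ∑ i : Fin n, flMax (s i) A) := by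
  let t : Fin n → Fin n → ℝ≥0 := fun i a => (s i a).toNNReal
  let W : Fin n → Finset ℝ≥0 := fun i => univ.image (t i)
  let R : Fin n → Finset (Σ i, W i) := fun a => {j | (j.2 : ℝ≥0) ≤ t j.1 a}
  have key : ∀ A : Finset (Fin n),
      ∑ i, flMax (s i) A = ∑ j ∈ A.biUnion R, ((W j.1).jump j.2 : ℝ) := by
    intro A
    have hbiUnion : A.biUnion R = ({j | ∃ a ∈ A, (j.2 : ℝ≥0) ≤ t j.1 a} : Finset (Σ i, W i)) := by
      ext j; simp [R]
    rw [hbiUnion, sum_filter, Fintype.sum_sigma]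
    refine sum_congr rfl fun i _ => ?_
    rw [flMax_eq_sup_toNNReal (hs i), ← sum_jump_filter_exists_le (W i) A (t i)
      fun a _ => mem_image_of_mem _ (mem_univ a), NNReal.coe_sum, sum_filter,
      ← sum_coe_sort (W i)]
    congr!
  simpa only [key] using isEntropic_sum_biUnion (fun j => ((W j.1).jump j.2 : ℝ))
    (fun _ => NNReal.coe_nonneg _) R
end

section
/- For λ ∈ [0, 1/2], the function F(A) = ∑_{i∈A}∑_{j∈V} s_{ij} − λ∑_{i∈A}∑_{j∈A} s_{ij} (with s symmetric, nonnegative, zero diagonal) is normalized, monotone nondecreasing, and submodular. -/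
/-!
The linear part `∑_{i ∈ A} ∑_j s i j` is modular, and for `s ≥ 0` the quadratic part
`∑_{A × A} s` is supermodular since `A² ∪ B² ⊆ (A ∪ B)²` and `A² ∩ B² = (A ∩ B)²`; with `λ ≥ 0`
this gives submodularity. For monotonicity, by symmetry the gain of adding `a ∉ A` is
`∑_j s a j - λ (s a a + 2 ∑_{j ∈ A} s a j)`, and `∑_j s a j ≥ s a a + ∑_{j ∈ A} s a j` makes it
nonnegative once `λ ≤ 1/2`.
-/

open Finset

section PairSums

variable {α M : Type*} [DecidableEq α]

theorem sum_sum_add_sum_sum_le_union_inter [AddCommMonoid M] [PartialOrder M]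
    [IsOrderedAddMonoid M] {s : α → α → M} (hs : ∀ i j, 0 ≤ s i j) (A B : Finset α) :
    (∑ i ∈ A, ∑ j ∈ A, s i j) + ∑ i ∈ B, ∑ j ∈ B, s i j ≤
      (∑ i ∈ A ∪ B, ∑ j ∈ A ∪ B, s i j) + ∑ i ∈ A ∩ B, ∑ j ∈ A ∩ B, s i j := by
  simp only [← sum_product' (f := s)]
  rw [← sum_union_inter, product_inter_product]
  gcongr
  · exact fun x _ _ ↦ hs x.1 x.2
  · exact union_subset (product_subset_product subset_union_left subset_union_left)
      (product_subset_product subset_union_right subset_union_right)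

theorem sum_sum_insert_of_symm [CommSemiring M] {s : α → α → M} (hsym : ∀ i j, s i j = s j i)
    {A : Finset α} {a : α} (ha : a ∉ A) :
    ∑ i ∈ insert a A, ∑ j ∈ insert a A, s i j =
      (∑ i ∈ A, ∑ j ∈ A, s i j) + s a a + 2 * ∑ j ∈ A, s a j := by
  simp only [sum_insert ha, sum_add_distrib]
  rw [sum_congr rfl fun i _ ↦ hsym i a]
  ring

end PairSums

section MonotoneGraphCut

variable {α : Type*} [Fintype α]

def monotoneGraphCut (s : α → α → ℝ) (lam : ℝ) (A : Finset α) : ℝ :=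
  (∑ i ∈ A, ∑ j, s i j) - lam * ∑ i ∈ A, ∑ j ∈ A, s i j

variable {s : α → α → ℝ} {lam : ℝ}

theorem monotoneGraphCut_empty : monotoneGraphCut s lam ∅ = 0 := by
  simp [monotoneGraphCut]

variable [DecidableEq α]

theorem monotoneGraphCut_le_insert (hsym : ∀ i j, s i j = s j i) (hnn : ∀ i j, 0 ≤ s i j)
    (hlam2 : lam ≤ 1 / 2) {A : Finset α} {a : α} (ha : a ∉ A) :
    monotoneGraphCut s lam A ≤ monotoneGraphCut s lam (insert a A) := by
  have hdeg : s a a + ∑ j ∈ A, s a j ≤ ∑ j, s a j := by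
    rw [← sum_insert ha]
    exact sum_le_univ_sum_of_nonneg (hnn a)
  have hA : 0 ≤ ∑ j ∈ A, s a j := sum_nonneg fun j _ ↦ hnn a j
  unfold monotoneGraphCut
  rw [sum_insert ha, sum_sum_insert_of_symm hsym ha]
  nlinarith [hnn a a]

theorem monotone_monotoneGraphCut (hsym : ∀ i j, s i j = s j i) (hnn : ∀ i j, 0 ≤ s i j)
    (hlam2 : lam ≤ 1 / 2) : Monotone (monotoneGraphCut s lam) :=
  Finset.monotone_iff_forall_le_insert.2 fun _ _ ha ↦
    monotoneGraphCut_le_insert hsym hnn hlam2 ha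

theorem monotoneGraphCut_union_add_inter_le (hnn : ∀ i j, 0 ≤ s i j) (hlam0 : 0 ≤ lam)
    (A B : Finset α) :
    monotoneGraphCut s lam (A ∪ B) + monotoneGraphCut s lam (A ∩ B) ≤
      monotoneGraphCut s lam A + monotoneGraphCut s lam B := by
  have hmod := sum_union_inter (s₁ := A) (s₂ := B) (f := fun i ↦ ∑ j, s i j)
  have hsuper := mul_le_mul_of_nonneg_left (sum_sum_add_sum_sum_le_union_inter hnn A B) hlam0
  unfold monotoneGraphCut
  linarith

end MonotoneGraphCut

theorem monotone_graph_cut_polymatroid_general {n : ℕ}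
    (s : Fin n → Fin n → ℝ) (hsym : ∀ i j, s i j = s j i)
    (hnn : ∀ i j, 0 ≤ s i j)
    (lam : ℝ) (hlam0 : 0 ≤ lam) (hlam2 : lam ≤ 1 / 2)
    (F : Finset (Fin n) → ℝ)
    (hF : ∀ A, F A = (∑ i ∈ A, ∑ j : Fin n, s i j) - lam * ∑ i ∈ A, ∑ j ∈ A, s i j) :
    F ∅ = 0 ∧ (∀ A B : Finset (Fin n), A ⊆ B → F A ≤ F B) ∧
      ∀ A B : Finset (Fin n), F (A ∪ B) + F (A ∩ B) ≤ F A + F B := by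
  obtain rfl : F = monotoneGraphCut s lam := funext hF
  exact ⟨monotoneGraphCut_empty, fun _ _ h ↦ monotone_monotoneGraphCut hsym hnn hlam2 h,
    monotoneGraphCut_union_add_inter_le hnn hlam0⟩

/-- For `λ ∈ [0, 1/2]`, the monotone graph-cut function is normalized, monotone
nondecreasing, and submodular. -/
theorem monotone_graph_cut_polymatroid {n : ℕ}
    (s : Fin n → Fin n → ℝ) (hsym : ∀ i j, s i j = s j i)
    (hnn : ∀ i j, 0 ≤ s i j) (hdiag : ∀ i, s i i = 0)
    (lam : ℝ) (hlam0 : 0 ≤ lam) (hlam2 : lam ≤ 1 / 2)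
    (F : Finset (Fin n) → ℝ)
    (hF : ∀ A, F A = (∑ i ∈ A, ∑ j : Fin n, s i j) - lam * ∑ i ∈ A, ∑ j ∈ A, s i j) :
    F ∅ = 0 ∧ (∀ A B : Finset (Fin n), A ⊆ B → F A ≤ F B) ∧
      ∀ A B : Finset (Fin n), F (A ∪ B) + F (A ∩ B) ≤ F A + F B :=
  monotone_graph_cut_polymatroid_general s hsym hnn lam hlam0 hlam2 F hF
end

section
/- The saturated coverage function f_sat(A) = min(∑_{u ∈ ∪_{i∈A} U_i} w_u, κ), with nonnegative integer weights w_u and nonnegative integer κ, is entropic up to a constant factor log q: there exist random variables X_1, ..., X_n with H(X_A) = f_sat(A)·log q for all A. -/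
open Finset

/-!
Give each `u ∈ U` exactly `w u` clones and attach distinct points of a prime field `𝔽_q` with
at least as many elements as there are clones. Draw a polynomial of degree `< κ` uniformly at random and let
`X i` record its values at the clones of the elements of `U i`. Up to an injective relabelling,
`X_A` is the vector of values at the `W(A)` clones covered by `A`. This evaluation map is linear, so
`X_A` is uniform on its image, and by Lagrange interpolation the image has `q ^ min (W(A), κ)`
elements.
-/

section Entropy

variable {Ω S : Type} [Fintype Ω]

theorem isPMF_uniform [Nonempty Ω] : IsPMF fun _ : Ω => (Fintype.card Ω : ℝ)⁻¹ :=
  ⟨fun _ => by positivity, by simp [Fintype.card_ne_zero]⟩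

theorem entropy_eq_sum [DecidableEq S] (p : Ω → ℝ) (X : Ω → S) :
    entropy p X = ∑ s ∈ univ.image X, Real.negMulLog (∑ ω with X ω = s, p ω) := by
  unfold entropy
  congr!

theorem entropy_comp_of_injective {S' : Type} (p : Ω → ℝ) (X : Ω → S) {f : S → S'}
    (hf : Function.Injective f) : entropy p (f ∘ X) = entropy p X := by
  classical
  rw [entropy_eq_sum, entropy_eq_sum, ← image_image, sum_image fun _ _ _ _ h => hf h]
  simp only [Function.comp_apply, hf.eq_iff]

theorem entropy_uniform_of_card_fiber_eq [DecidableEq S] (X : Ω → S) {c : ℕ}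
    (hc : ∀ s ∈ univ.image X, #{ω | X ω = s} = c) :
    entropy (fun _ => (Fintype.card Ω : ℝ)⁻¹) X = Real.log #(univ.image X) := by
  rw [entropy_eq_sum]
  set I := univ.image X
  have hcard : Fintype.card Ω = c * #I := by
    rw [← card_univ, card_eq_sum_card_fiberwise fun ω _ => mem_image_of_mem X (mem_univ ω),
      sum_congr rfl hc, sum_const, smul_eq_mul, mul_comm]
  have hfiber : ∀ s ∈ I, ∑ ω with X ω = s, (Fintype.card Ω : ℝ)⁻¹ = (#I : ℝ)⁻¹ := by
    intro s hs
    have hc0 : (c : ℝ) ≠ 0 := by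
      obtain ⟨ω, -, rfl⟩ := mem_image.1 hs
      rw [← hc _ hs]
      exact_mod_cast (card_pos.2 ⟨ω, by simp⟩).ne'
    rw [sum_const, hc s hs, nsmul_eq_mul, hcard, Nat.cast_mul, mul_inv, ← mul_assoc,
      mul_inv_cancel₀ hc0, one_mul]
  rw [sum_congr rfl fun s hs => by rw [hfiber s hs], sum_const, nsmul_eq_mul,
    Real.negMulLog, Real.log_inv]
  rcases eq_or_ne (#I : ℝ) 0 with h | h
  · simp [h]
  · field_simp

theorem entropy_uniform_comp_addMonoidHom {G H F : Type} [AddGroup G] [Fintype G] [AddMonoid H]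
    [DecidableEq H] [FunLike F G H] [AddMonoidHomClass F G H] (e : Ω ≃ G) (f : F) :
    entropy (fun _ => (Fintype.card Ω : ℝ)⁻¹) (f ∘ e) = Real.log #(univ.image f) := by
  classical
  have himage : univ.image (f ∘ e) = univ.image f := by
    rw [← image_image, image_univ_equiv]
  rw [entropy_uniform_of_card_fiber_eq (c := #{g | f g = 0}), himage]
  intro s hs
  rw [himage] at hs
  obtain ⟨g, -, rfl⟩ := mem_image.1 hs
  rw [← AddMonoidHom.card_fiber_eq_of_mem_range f ⟨g, rfl⟩ ⟨0, map_zero f⟩]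
  exact card_equiv e (by simp)

end Entropy

section Interpolation

open Polynomial

variable {K J : Type} [Field K]

/-- The Reed–Solomon encoding: the values at the nodes `x` of the polynomial with coefficient
vector `c`, i.e. multiplication by the rectangular Vandermonde matrix of `x`. -/
noncomputable def evalNodes (x : J → K) (κ : ℕ) : (Fin κ → K) →ₗ[K] J → K :=
  LinearMap.pi fun j =>
    leval (x j) ∘ₗ (degreeLT K κ).subtype ∘ₗ (degreeLTEquiv K κ).symm.toLinearMap

theorem evalNodes_apply (x : J → K) (κ : ℕ) (c : Fin κ → K) (j : J) :
    evalNodes x κ c j = ((degreeLTEquiv K κ).symm c : K[X]).eval (x j) :=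
  rfl

variable [Fintype J] {x : J → K}

theorem evalNodes_injective (hx : Function.Injective x) {κ : ℕ} (hκ : κ ≤ Fintype.card J) :
    Function.Injective (evalNodes x κ) := by
  refine (injective_iff_map_eq_zero _).2 fun c hc => ?_
  set p := (degreeLTEquiv K κ).symm c
  have hp : (p : K[X]) = 0 := by
    refine eq_zero_of_degree_lt_of_eval_index_eq_zero univ hx.injOn ?_
      fun j _ => congrFun hc j
    exact (mem_degreeLT.1 p.2).trans_le (by simpa using hκ)
  simpa [p] using congrArg (degreeLTEquiv K κ) (Subtype.ext hp : p = 0)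

theorem evalNodes_surjective (hx : Function.Injective x) {κ : ℕ} (hκ : Fintype.card J ≤ κ) :
    Function.Surjective (evalNodes x κ) := by
  classical
  intro v
  set P := Lagrange.interpolate univ x v
  have hP : P ∈ degreeLT K κ :=
    mem_degreeLT.2 ((Lagrange.degree_interpolate_lt v hx.injOn).trans_le (by simpa using hκ))
  refine ⟨degreeLTEquiv K κ ⟨P, hP⟩, funext fun j => ?_⟩
  rw [evalNodes_apply, LinearEquiv.symm_apply_apply]
  exact Lagrange.eval_interpolate_at_node v hx.injOn (mem_univ j)

theorem card_image_evalNodes [Fintype K] [DecidableEq K] (hx : Function.Injective x) (κ : ℕ) :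
    #(univ.image (evalNodes x κ)) = Fintype.card K ^ min (Fintype.card J) κ := by
  classical
  rcases le_total (Fintype.card J) κ with hκ | hκ
  · rw [image_univ_of_surjective (evalNodes_surjective hx hκ), card_univ, Fintype.card_fun,
      min_eq_left hκ]
  · rw [card_image_of_injective _ (evalNodes_injective hx hκ), card_univ, Fintype.card_fun,
      Fintype.card_fin, min_eq_right hκ]

end Interpolation

section Coverage

variable {U : Type} [DecidableEq U]

theorem card_subtype_fst_mem [Fintype U] (w : U → ℕ) (T : Finset U) :
    Fintype.card {j : (u : U) × Fin (w u) // j.1 ∈ T} = ∑ u ∈ T, w u := by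
  have : ({j | j.1 ∈ T} : Finset ((u : U) × Fin (w u))) = T.sigma fun _ => univ := by
    ext; simp
  simp [Fintype.card_subtype, this]

variable {ι K : Type} [Zero K] {w : U → ℕ}

def spreadOverCover (Us : ι → Finset U) (A : Finset ι)
    (v : {j : (u : U) × Fin (w u) // j.1 ∈ A.biUnion Us} → K) (i : A)
    (j : (u : U) × Fin (w u)) : K :=
  if h : j.1 ∈ Us i then v ⟨j, mem_biUnion.2 ⟨i, i.2, h⟩⟩ else 0

theorem spreadOverCover_injective (Us : ι → Finset U) (A : Finset ι) :
    Function.Injective (spreadOverCover (w := w) (K := K) Us A) := by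
  intro v v' h
  funext ⟨j, hj⟩
  obtain ⟨i, hi, hji⟩ := mem_biUnion.1 hj
  simpa [spreadOverCover, hji] using congrFun (congrFun h ⟨i, hi⟩) j

end Coverage

/-- The saturated coverage function `A ↦ min(∑_{u ∈ ∪_{i∈A} U_i} w_u, κ)` with
nonnegative integer weights is entropic up to the factor `log q` for a suitable
prime power `q`. -/
theorem saturated_coverage_is_entropic {n : ℕ} {U : Type} [Fintype U] [DecidableEq U]
    (w : U → ℕ) (Us : Fin n → Finset U) (κ : ℕ) :
    ∃ q : ℕ, IsPrimePow q ∧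
      IsEntropic (fun A : Finset (Fin n) =>
        ((min (∑ u ∈ A.biUnion Us, w u) κ : ℕ) : ℝ) * Real.log q) := by
  classical
  obtain ⟨q, hcard, hq⟩ := Nat.exists_infinite_primes (Fintype.card ((u : U) × Fin (w u)))
  have : Fact q.Prime := ⟨hq⟩
  obtain ⟨x⟩ : Nonempty (((u : U) × Fin (w u)) ↪ ZMod q) :=
    Function.Embedding.nonempty_of_card_le (by rwa [ZMod.card])
  let e := (Fintype.equivFin (Fin κ → ZMod q)).symm
  refine ⟨q, hq.isPrimePow, _, _, fun _ => (Fintype.card (Fin _) : ℝ)⁻¹,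
    fun i ω j => if j.1 ∈ Us i then evalNodes x κ (e ω) j else 0, isPMF_uniform, fun A => ?_⟩
  have hfactor : (fun ω (i : A) j => if j.1 ∈ Us i then evalNodes x κ (e ω) j else 0) =
      spreadOverCover Us A ∘ evalNodes (x ∘ Subtype.val) κ ∘ e := by
    funext ω i j
    by_cases hj : j.1 ∈ Us i <;> simp [spreadOverCover, hj, evalNodes_apply]
  rw [hfactor, entropy_comp_of_injective _ _ (spreadOverCover_injective Us A),
    entropy_uniform_comp_addMonoidHom,
    card_image_evalNodes (x.injective.comp Subtype.val_injective), ZMod.card,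
    card_subtype_fst_mem, Nat.cast_pow, Real.log_pow]
end
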